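/- Let B_1 = {0, 11} and define inductively B_{n+1} = {b_1 b_2 ⋯ b_{t(n)} τ(n) : b_i ∈ B_n}, where τ(n) is the concatenation of all elements of B_n (in a fixed enumeration), and let X_n be the coded shift generated by B_n. Let s(n) and ℓ(n) denote the shortest and longest lengths of words in B_n. Let ε > 0 and suppose the sequence (t(n))_{n≥1} of integers t(n) ≥ 2 satisfies, for all n ≥ 1, t(n) > |τ(n)|/(2ℓ(n) − 3s(n)) and t(n) > 2^n(|τ(n)| + 3ℓ(n))/(s(n)·ε). Then Σ_{n=1}^∞ d̄^H(X_n, X_{n+1}) < ε. -/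

import Mathlib

open MeasureTheory Filter Topology

namespace DbarPaper

variable {A : Type} [Fintype A] [DecidableEq A] [Inhabited A]
  [TopologicalSpace A] [DiscreteTopology A]
  [MeasurableSpace A] [MeasurableSingletonClass A]

/-- The shift map on the full shift `𝒜^∞ = ℕ → A`. -/
def shift : (ℕ → A) → (ℕ → A) := fun x n => x (n + 1)

/-- A shift space: a nonempty, closed, shift-invariant subset of the full shift. -/
def ShiftSpace (X : Set (ℕ → A)) : Prop :=
  X.Nonempty ∧ IsClosed X ∧ ∀ x ∈ X, shift x ∈ X

/-- The word `w` appears in the sequence `x`. -/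
def occursIn (w : List A) (x : ℕ → A) : Prop :=
  ∃ i : ℕ, w = List.ofFn (fun k : Fin w.length => x (i + (k : ℕ)))

/-- The language of a set `X`: all finite words appearing in points of `X`. -/
def lang (X : Set (ℕ → A)) : Set (List A) := {w | ∃ x ∈ X, occursIn w x}

/-- Words of length `n` in the language of `X`. -/
def langN (n : ℕ) (X : Set (ℕ → A)) : Set (List A) := {w | w ∈ lang X ∧ w.length = n}

/-- The pseudometric `d̄` on the full shift. -/
noncomputable def dbar (x y : ℕ → A) : ℝ :=
  Filter.limsup
    (fun n => (((Finset.range n).filter (fun j => x j ≠ y j)).card : ℝ) / (n : ℝ))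
    Filter.atTop

/-- Hausdorff "distance" between two sets induced by a `ℝ`-valued distance. -/
noncomputable def hausdist {Z : Type*} (d : Z → Z → ℝ) (P Q : Set Z) : ℝ :=
  max (⨆ p : P, ⨅ q : Q, d p q) (⨆ q : Q, ⨅ p : P, d p q)

/-- A probability measure is shift-invariant. -/
def invariantPM (μ : ProbabilityMeasure (ℕ → A)) : Prop :=
  (μ : Measure (ℕ → A)).map shift = (μ : Measure (ℕ → A))

/-- `M_σ(X)`: shift-invariant Borel probability measures giving `X` full measure. -/
def Msigma (X : Set (ℕ → A)) : Set (ProbabilityMeasure (ℕ → A)) :=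
  {μ | invariantPM μ ∧ μ X = 1}

/-- `ξ` is a joining of `μ` and `ν`: a `σ×σ`-invariant measure on the product with
marginals `μ` and `ν`. -/
def IsJoining (ξ : Measure ((ℕ → A) × (ℕ → A))) (μ ν : ProbabilityMeasure (ℕ → A)) : Prop :=
  ξ.map (Prod.map shift shift) = ξ ∧
  ξ.map Prod.fst = (μ : Measure (ℕ → A)) ∧ ξ.map Prod.snd = (ν : Measure (ℕ → A))

/-- Ornstein's metric `d̄_M` on invariant measures. -/
noncomputable def dbarM (μ ν : ProbabilityMeasure (ℕ → A)) : ℝ :=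
  sInf {r : ℝ | ∃ ξ : Measure ((ℕ → A) × (ℕ → A)),
    IsJoining ξ μ ν ∧ r = (ξ {p | p.1 0 ≠ p.2 0}).toReal}

/-- `d̄_M`-stability of a shift space (Austin). -/
def DbarMStable (X : Set (ℕ → A)) : Prop :=
  ∀ ε : ℝ, 0 < ε → ∃ U : Set (ProbabilityMeasure (ℕ → A)), IsOpen U ∧ Msigma X ⊆ U ∧
    ∀ ν ∈ U, invariantPM ν → ∃ μ ∈ Msigma X, dbarM μ ν < ε

/-- The infinite concatenation of a sequence of (nonempty) words. -/
def concatSeq (w : ℕ → List A) : ℕ → A := fun n =>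
  ((List.ofFn (fun i : Fin (n + 1) => w (i : ℕ))).flatten).getD n default

/-- The `d̄`-shadowing property. -/
def DbarShadowing (X : Set (ℕ → A)) : Prop :=
  ∀ ε : ℝ, 0 < ε → ∃ N : ℕ, 0 < N ∧ ∀ w : ℕ → List A,
    (∀ j, w j ∈ lang X) → (∀ j, N ≤ (w j).length) →
    ∃ x' ∈ X, dbar (concatSeq w) x' < ε

/-- `U_n(X)`: the union of cylinders of words of length `n` in the language of `X`. -/
def cylNbhd (X : Set (ℕ → A)) (n : ℕ) : Set (ℕ → A) :=
  {x | List.ofFn (fun k : Fin n => x (k : ℕ)) ∈ lang X}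

/-- The `n`-th (topological) Markov approximation of `X`: all sequences whose subwords of
length `n+1` belong to the language of `X`. -/
def markovApprox (X : Set (ℕ → A)) (n : ℕ) : Set (ℕ → A) :=
  {x | ∀ i : ℕ, List.ofFn (fun k : Fin (n + 1) => x (i + (k : ℕ))) ∈ lang X}

/-- Transitivity, in terms of the language. -/
def TransitiveShift (X : Set (ℕ → A)) : Prop :=
  ∀ u ∈ lang X, ∀ w ∈ lang X, ∃ v : List A, u ++ v ++ w ∈ lang X

/-- Topological mixing, in terms of the language. -/
def MixingShift (X : Set (ℕ → A)) : Prop :=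
  ∀ u ∈ lang X, ∀ w ∈ lang X, ∃ N : ℕ, ∀ m : ℕ, N ≤ m →
    ∃ v : List A, v.length = m ∧ u ++ v ++ w ∈ lang X

/-- Chain mixing: all but finitely many Markov approximations are topologically mixing. -/
def ChainMixing (X : Set (ℕ → A)) : Prop :=
  ∃ N : ℕ, ∀ n : ℕ, N ≤ n → MixingShift (markovApprox X n)

/-- `C` is the measure center of `X`: the smallest shift space contained in `X` of full
measure for every invariant measure of `X`. -/
def IsMeasureCenter (X C : Set (ℕ → A)) : Prop :=
  ShiftSpace C ∧ C ⊆ X ∧ (∀ μ ∈ Msigma X, μ C = 1) ∧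
  ∀ Y : Set (ℕ → A), ShiftSpace Y → Y ⊆ X → (∀ μ ∈ Msigma X, μ Y = 1) → C ⊆ Y

/-- Measure of the cylinder determined by a word of length `n`. -/
noncomputable def cylMeasure (μ : ProbabilityMeasure (ℕ → A)) {n : ℕ} (w : Fin n → A) : ℝ :=
  ((μ : Measure (ℕ → A)) {x | ∀ k : Fin n, x (k : ℕ) = w k}).toReal

/-- Entropy of the partition into cylinders of length `n`. -/
noncomputable def blockEntropy (μ : ProbabilityMeasure (ℕ → A)) (n : ℕ) : ℝ :=
  -∑ w : Fin n → A, cylMeasure μ w * Real.log (cylMeasure μ w)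

/-- Kolmogorov–Sinai entropy of a shift-invariant measure. -/
noncomputable def ksEntropy (μ : ProbabilityMeasure (ℕ → A)) : ℝ :=
  Filter.limsup (fun n => blockEntropy μ n / (n : ℝ)) Filter.atTop

/-- `μ` is ergodic for the shift. -/
def ErgodicPM (μ : ProbabilityMeasure (ℕ → A)) : Prop :=
  Ergodic shift (μ : Measure (ℕ → A))

/-- Ergodic measures are entropy dense in `M_σ(X)`. -/
def EntropyDense (X : Set (ℕ → A)) : Prop :=
  ∀ μ ∈ Msigma X, ∀ U : Set (ProbabilityMeasure (ℕ → A)), IsOpen U → μ ∈ U →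
    ∀ ε : ℝ, 0 < ε →
      ∃ ν ∈ Msigma X, ν ∈ U ∧ ErgodicPM ν ∧ |ksEntropy ν - ksEntropy μ| < ε

/-- Topological entropy of a shift space. -/
noncomputable def topEntropy (X : Set (ℕ → A)) : ℝ :=
  Filter.limsup (fun n => Real.log (Nat.card ↥(langN n X)) / (n : ℝ)) Filter.atTop

/-- The standard metric on the full shift. -/
noncomputable def rho (x y : ℕ → A) : ℝ :=
  open scoped Classical in
  if x = y then 0 else (2 : ℝ) ^ (-((sInf {j : ℕ | x j ≠ y j} : ℕ) : ℤ))

/-- Proximality of a shift space. -/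
def ProximalShift (X : Set (ℕ → A)) : Prop :=
  ∀ x ∈ X, ∀ y ∈ X,
    Filter.liminf (fun n => rho (shift^[n] x) (shift^[n] y)) Filter.atTop = 0

/-- Minimality of a shift space. -/
def MinimalShift (X : Set (ℕ → A)) : Prop :=
  ShiftSpace X ∧ ∀ Y : Set (ℕ → A), ShiftSpace Y → Y ⊆ X → Y = X

/-- An `A`-labeled directed multigraph on vertices `V` with edges `E`. -/
structure LabeledGraph (A V E : Type*) where
  src : E → V
  dst : E → V
  lab : E → A

namespace LabeledGraph

variable {A' V E : Type*}

/-- `es` is a path in `G` from `u` to `v`. -/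
def PathFromTo (G : LabeledGraph A' V E) (es : List E) (u v : V) : Prop :=
  es.Chain' (fun e f => G.dst e = G.src f) ∧
  es.head?.map G.src = some u ∧ es.getLast?.map G.dst = some v

/-- `G` is strongly connected. -/
def StronglyConnected (G : LabeledGraph A' V E) : Prop :=
  ∀ u v : V, ∃ es : List E, G.PathFromTo es u v

/-- `d` is the period of `G`: the gcd of lengths of closed paths. -/
def HasPeriod (G : LabeledGraph A' V E) (d : ℕ) : Prop :=
  (∀ (es : List E) (u : V), G.PathFromTo es u u → d ∣ es.length) ∧
  ∀ d' : ℕ, (∀ (es : List E) (u : V), G.PathFromTo es u u → d' ∣ es.length) → d' ∣ d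

/-- `b` is a safe symbol for `G`. -/
def SafeSymbol (G : LabeledGraph A' V E) (b : A') : Prop :=
  ∀ e : E, ∃ e' : E, G.src e' = G.src e ∧ G.dst e' = G.dst e ∧ G.lab e' = b

/-- The shift space presented by the labeled graph `G`: labels read along infinite paths. -/
def presents (G : LabeledGraph A' V E) : Set (ℕ → A') :=
  {x | ∃ e : ℕ → E, (∀ j, G.dst (e j) = G.src (e (j + 1))) ∧ ∀ j, x j = G.lab (e j)}

end LabeledGraph

/-- The coupling of a family of labeled graphs: an edge labeled `a` from `v` to `v'` exists
iff each `G k` has an edge from `v k` to `v' k` labeled `a`. -/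
def coupling {A' : Type*} {n : ℕ} {V E : Fin n → Type*}
    (G : ∀ k, LabeledGraph A' (V k) (E k)) :
    LabeledGraph A' (∀ k, V k) {p : (∀ k, E k) × A' // ∀ k, (G k).lab (p.1 k) = p.2} where
  src p := fun k => (G k).src (p.1.1 k)
  dst p := fun k => (G k).dst (p.1.1 k)
  lab p := p.1.2

/-- Sofic shift spaces: those presented by some finite labeled graph. -/
def Sofic (X : Set (ℕ → A)) : Prop :=
  ∃ (V E : Type) (_ : Fintype V) (_ : Fintype E) (G : LabeledGraph A V E),
    X = G.presents

/-- The coded shift generated by a finite set of words `B`: the closure of the set of all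
shifts of infinite concatenations of words from `B`. -/
def codedShift (B : Finset (List A)) : Set (ℕ → A) :=
  closure {x | ∃ (b : ℕ → List A) (k : ℕ), (∀ i, b i ∈ B) ∧ x = shift^[k] (concatSeq b)}


/-- The length of a shortest word in `B`. -/
noncomputable def minLen (B : Finset (List Bool)) : ℕ :=
  sInf (List.length '' (B : Set (List Bool)))

/-- The length of a longest word in `B`. -/
noncomputable def maxLen (B : Finset (List Bool)) : ℕ :=
  sSup (List.length '' (B : Set (List Bool)))

end DbarPaper

namespace DbarPaper

/-!
Every point of `X_n` is, up to a shift, a concatenation of words of `B_n`. Keeping `t(n) - 3`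
consecutive words and replacing the following run of words, whose length lies between
`3 s + |τ|` and `3 s + |τ| + ℓ`, by three words of `B_n` and the marker `τ(n)` produces a word of
`B_{n+1}` that differs from the original block only in its last `|τ(n)| + 3 ℓ` symbols. Iterating
block by block gives a point of `X_{n+1}` at `d̄`-distance at most
`(|τ(n)| + 3 ℓ(n)) / (t(n) s(n) + |τ(n)|)`, and the bound passes to the closure by compactness.
Conversely `X_{n+1} ⊆ X_n`, since every word of `B_{n+1}` is a concatenation of words of `B_n`.
The second growth condition makes the `n`-th distance smaller than `ε / 2^n`; the first keeps the
lengths of the words of `B_n` filling an interval `[s, ℓ]` with `3 s < 2 ℓ`, so that the three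
replacement words always exist.
-/

variable {α : Type}

theorem shift_iterate_apply (x : ℕ → α) (k n : ℕ) : shift^[k] x n = x (n + k) := by
  induction k generalizing x with
  | zero => rfl
  | succ k ih => rw [Function.iterate_succ_apply, ih]; rfl

section Mismatches

variable [DecidableEq α]

-- The numerator in `dbar`, so that `dbar x y` is by definition the `limsup` of
-- `mismatches x y n / n`.
def mismatches (x y : ℕ → α) (n : ℕ) : ℕ :=
  ((Finset.range n).filter fun j => x j ≠ y j).card

theorem mismatches_le (x y : ℕ → α) (n : ℕ) : mismatches x y n ≤ n :=
  (Finset.card_filter_le _ _).trans_eq (Finset.card_range n)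

theorem mismatches_mono (x y : ℕ → α) : Monotone (mismatches x y) := fun _ _ h =>
  Finset.card_le_card (Finset.filter_subset_filter _ (Finset.range_subset_range.mpr h))

theorem mismatches_eq_zero {x y : ℕ → α} {n : ℕ} (h : ∀ i < n, x i = y i) :
    mismatches x y n = 0 := by
  simp_all [mismatches]

theorem mismatches_congr {x y x' y' : ℕ → α} {n : ℕ} (hx : ∀ i < n, x i = x' i)
    (hy : ∀ i < n, y i = y' i) : mismatches x y n = mismatches x' y' n := by
  unfold mismatches
  congr 1
  refine Finset.filter_congr fun i hi => ?_
  rw [hx i (Finset.mem_range.mp hi), hy i (Finset.mem_range.mp hi)]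

theorem mismatches_add (x y : ℕ → α) (a m : ℕ) :
    mismatches x y (a + m) = mismatches x y a + mismatches (shift^[a] x) (shift^[a] y) m := by
  simp only [mismatches, Finset.card_filter, Finset.sum_range_add, shift_iterate_apply, add_comm]

theorem mismatches_shift_iterate_le (x y : ℕ → α) (k n : ℕ) :
    mismatches (shift^[k] x) (shift^[k] y) n ≤ mismatches x y (k + n) := by
  rw [mismatches_add]
  exact Nat.le_add_left _ _

/-- `R` describes `x` and `y` coinductively as concatenations of blocks of length at least `D`
that agree except possibly on their last `E` symbols. -/
theorem mismatches_le_of_blocks {R : (ℕ → α) → (ℕ → α) → Prop} {D E : ℕ} (hD : 0 < D)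
    (hR : ∀ x y, R x y → ∃ a, D ≤ a ∧ (∀ i < a - E, x i = y i) ∧
      R (shift^[a] x) (shift^[a] y))
    {x y : ℕ → α} (hxy : R x y) (n : ℕ) : mismatches x y n ≤ (n / D + 1) * E := by
  induction n using Nat.strong_induction_on generalizing x y with
  | _ n ih =>
  obtain ⟨a, hDa, hagree, hnext⟩ := hR x y hxy
  have hblock : mismatches x y a ≤ E := by
    have hsplit := mismatches_add x y (a - E) (a - (a - E))
    rw [Nat.add_sub_cancel' (Nat.sub_le a E), mismatches_eq_zero hagree] at hsplit
    have := mismatches_le (shift^[a - E] x) (shift^[a - E] y) (a - (a - E))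
    omega
  rcases le_or_gt n a with hna | hna
  · calc mismatches x y n ≤ mismatches x y a := mismatches_mono x y hna
      _ ≤ (n / D + 1) * E := hblock.trans (Nat.le_mul_of_pos_left E (Nat.succ_pos _))
  · obtain ⟨m, rfl⟩ := Nat.exists_eq_add_of_lt hna
    have hdiv : (m + 1) / D + 1 ≤ (a + m + 1) / D := by
      rw [← Nat.add_div_right _ hD]
      exact Nat.div_le_div_right (by omega)
    calc mismatches x y (a + m + 1)
        = mismatches x y a + mismatches (shift^[a] x) (shift^[a] y) (m + 1) := by
          rw [add_assoc, mismatches_add]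
      _ ≤ E + ((m + 1) / D + 1) * E := add_le_add hblock (ih _ (by omega) hnext)
      _ ≤ ((a + m + 1) / D + 1) * E := by nlinarith

theorem dbar_nonneg (x y : ℕ → α) : 0 ≤ dbar x y := by
  have hle : ∀ n, ((mismatches x y n : ℝ) / n) ≤ 1 := fun n =>
    div_le_one_of_le₀ (by exact_mod_cast mismatches_le x y n) n.cast_nonneg
  exact Filter.le_limsup_of_frequently_le (Frequently.of_forall fun n => by positivity)
    (isBoundedUnder_of ⟨1, hle⟩)

theorem dbar_le_of_mismatches_le {x y : ℕ → α} {δ C : ℝ}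
    (h : ∀ n, (mismatches x y n : ℝ) ≤ δ * n + C) : dbar x y ≤ δ := by
  have hlim : Tendsto (fun n : ℕ => δ + C / n) atTop (𝓝 δ) := by
    simpa using tendsto_const_nhds.add (tendsto_const_div_atTop_nhds_zero_nat C)
  have hev : ∀ᶠ n : ℕ in atTop, (mismatches x y n : ℝ) / n ≤ δ + C / n := by
    filter_upwards [eventually_gt_atTop 0] with n hn
    have hn' : (0 : ℝ) < n := by exact_mod_cast hn
    rw [div_le_iff₀ hn', add_mul, div_mul_cancel₀ _ hn'.ne']
    linarith [h n]
  calc dbar x y ≤ limsup (fun n : ℕ => δ + C / n) atTop :=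
        limsup_le_limsup hev (isCoboundedUnder_le_of_le atTop fun n => by positivity)
          hlim.isBoundedUnder_le
    _ = δ := hlim.limsup_eq

theorem dbar_self (x : ℕ → α) : dbar x x = 0 :=
  le_antisymm (dbar_le_of_mismatches_le (C := 0) fun n => by simp [mismatches_eq_zero])
    (dbar_nonneg x x)

end Mismatches

section Closure

variable [DecidableEq α] [TopologicalSpace α] [DiscreteTopology α] [Finite α]

theorem exists_mismatches_le_of_mem_closure {S Y : Set (ℕ → α)} (hY : IsClosed Y)
    {f : ℕ → ℕ} (h : ∀ s ∈ S, ∃ y ∈ Y, ∀ n, mismatches s y n ≤ f n) {x : ℕ → α}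
    (hx : x ∈ closure S) : ∃ y ∈ Y, ∀ n, mismatches x y n ≤ f n := by
  have hcyl : ∀ (z : ℕ → α) (n : ℕ), (Set.Iio n).pi (fun i => {z i}) ∈ 𝓝 z := fun z n =>
    (isOpen_set_pi (Set.finite_Iio n) fun i _ => isOpen_discrete _).mem_nhds (by simp)
  have happrox : ∀ n, ∃ s ∈ S, ∀ i < n, s i = x i := fun n => by
    obtain ⟨s, hs, hsS⟩ := mem_closure_iff_nhds.mp hx _ (hcyl x n)
    exact ⟨s, hsS, by simpa using hs⟩
  choose s hsS hsx using happrox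
  choose y hyY hy using fun n => h (s n) (hsS n)
  obtain ⟨z, hzY, φ, hφ, hlim⟩ := hY.isCompact.tendsto_subseq hyY
  refine ⟨z, hzY, fun n => ?_⟩
  obtain ⟨k, hkz, hkn⟩ :=
    ((hlim.eventually (hcyl z n)).and (hφ.tendsto_atTop.eventually_ge_atTop n)).exists
  simp only [Set.mem_Iio, Set.mem_singleton_iff] at hkz
  calc mismatches x z n = mismatches (s (φ k)) (y (φ k)) n :=
        mismatches_congr (fun i hi => (hsx _ i (by omega)).symm) fun i hi => (hkz i hi).symm
    _ ≤ f n := hy _ n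

end Closure

section Concatenation

def concatPrefix (w : ℕ → List α) (K : ℕ) : List α :=
  (List.ofFn fun i : Fin K => w i).flatten

theorem concatPrefix_zero (w : ℕ → List α) : concatPrefix w 0 = [] := rfl

theorem concatPrefix_succ (w : ℕ → List α) (K : ℕ) :
    concatPrefix w (K + 1) = concatPrefix w K ++ w K := by
  rw [concatPrefix, List.ofFn_succ']
  simp [concatPrefix]

theorem concatPrefix_one (w : ℕ → List α) : concatPrefix w 1 = w 0 := by
  simp [concatPrefix]

theorem concatPrefix_add (w : ℕ → List α) (a b : ℕ) :
    concatPrefix w (a + b) = concatPrefix w a ++ concatPrefix (fun i => w (a + i)) b := by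
  induction b with
  | zero => simp [concatPrefix_zero]
  | succ b ih => rw [← add_assoc, concatPrefix_succ, ih, concatPrefix_succ, List.append_assoc]

theorem length_concatPrefix (w : ℕ → List α) (K : ℕ) :
    (concatPrefix w K).length = ∑ i ∈ Finset.range K, (w i).length := by
  induction K with
  | zero => rfl
  | succ K ih => rw [concatPrefix_succ, List.length_append, ih, Finset.sum_range_succ]

theorem mul_le_length_concatPrefix {w : ℕ → List α} {s : ℕ} (h : ∀ i, s ≤ (w i).length)
    (K : ℕ) : K * s ≤ (concatPrefix w K).length := by
  rw [length_concatPrefix]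
  simpa using Finset.card_nsmul_le_sum (Finset.range K) _ s fun i _ => h i

theorem le_length_concatPrefix {w : ℕ → List α} (h : ∀ i, w i ≠ []) (K : ℕ) :
    K ≤ (concatPrefix w K).length := by
  simpa using mul_le_length_concatPrefix (s := 1) (fun i => List.length_pos_iff.mpr (h i)) K

theorem concatPrefix_prefix (w : ℕ → List α) {K K' : ℕ} (h : K ≤ K') :
    concatPrefix w K <+: concatPrefix w K' := by
  obtain ⟨b, rfl⟩ := Nat.exists_eq_add_of_le h
  rw [concatPrefix_add]
  exact List.prefix_append _ _

theorem concatPrefix_eq_flatten {w : ℕ → List α} {l : List (List α)}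
    (h : ∀ i (hi : i < l.length), w i = l[i]) : concatPrefix w l.length = l.flatten := by
  unfold concatPrefix
  congr 1
  exact (List.ofFn_congr rfl _).trans (by simp [h])

end Concatenation

section ConcatSeq

theorem concatSeq_eq_getD [Inhabited α] {w : ℕ → List α} (hw : ∀ i, w i ≠ []) {n K : ℕ}
    (hn : n < (concatPrefix w K).length) : concatSeq w n = (concatPrefix w K).getD n default := by
  change (concatPrefix w (n + 1)).getD n default = _
  rcases le_total (n + 1) K with hK | hK
  · obtain ⟨r, hr⟩ := concatPrefix_prefix w hK
    rw [← hr, List.getD_append _ _ _ _ (le_length_concatPrefix hw (n + 1))]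
  · obtain ⟨r, hr⟩ := concatPrefix_prefix w hK
    rw [← hr, List.getD_append _ _ _ _ hn]

theorem concatSeq_eq_getElem [Inhabited α] {w : ℕ → List α} (hw : ∀ i, w i ≠ []) {n K : ℕ}
    (hn : n < (concatPrefix w K).length) : concatSeq w n = (concatPrefix w K)[n] := by
  rw [concatSeq_eq_getD hw hn, List.getD_eq_getElem]

theorem shift_iterate_concatSeq [Inhabited α] {w : ℕ → List α} (hw : ∀ i, w i ≠ []) (r : ℕ) :
    shift^[(concatPrefix w r).length] (concatSeq w) = concatSeq fun i => w (r + i) := by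
  funext n
  have hn : n + (concatPrefix w r).length < (concatPrefix w (r + (n + 1))).length := by
    rw [concatPrefix_add, List.length_append]
    have := le_length_concatPrefix (fun i => hw (r + i)) (n + 1)
    omega
  rw [shift_iterate_apply, concatSeq_eq_getD hw hn, concatPrefix_add,
    List.getD_append_right _ _ _ _ (Nat.le_add_left _ _), Nat.add_sub_cancel]
  rfl

theorem exists_shift_iterate_concatSeq [Inhabited α] {w : ℕ → List α} (hw : ∀ i, w i ≠ []) (k : ℕ) :
    ∃ j k', k' < (w j).length ∧
      shift^[k] (concatSeq w) = shift^[k'] (concatSeq fun i => w (j + i)) := by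
  induction k with
  | zero => exact ⟨0, 0, List.length_pos_iff.mpr (hw 0), by simp⟩
  | succ k ih =>
    obtain ⟨j, k', hk', heq⟩ := ih
    rw [Function.iterate_succ_apply', heq, ← Function.iterate_succ_apply' shift]
    rcases Nat.lt_or_ge (k' + 1) (w j).length with hlt | hge
    · exact ⟨j, k' + 1, hlt, rfl⟩
    · refine ⟨j + 1, 0, List.length_pos_iff.mpr (hw _), ?_⟩
      have hlen : k' + 1 = (concatPrefix (fun i => w (j + i)) 1).length := by
        rw [concatPrefix_one, add_zero]; omega
      rw [Nat.succ_eq_add_one, hlen, shift_iterate_concatSeq fun i => hw (j + i)]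
      simp only [Function.iterate_zero, id, add_assoc]

-- `concatSeq g` is taken over the alphabet `List α`: it is the stream of the words of
-- `g 0`, `g 1`, … in order.
theorem exists_mem_of_concatSeq {g : ℕ → List (List α)} (hg : ∀ i, g i ≠ []) (n : ℕ) :
    ∃ i, concatSeq g n ∈ g i := by
  have hn := le_length_concatPrefix hg (n + 1)
  rw [concatSeq_eq_getElem hg hn]
  obtain ⟨l, hl, hmem⟩ := List.mem_flatten.mp (List.getElem_mem hn)
  obtain ⟨i, rfl⟩ := List.mem_ofFn.mp hl
  exact ⟨i, hmem⟩

theorem concatSeq_concatSeq [Inhabited α] {g : ℕ → List (List α)} (hg : ∀ i, g i ≠ [])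
    (hne : ∀ i, ∀ u ∈ g i, u ≠ []) :
    concatSeq (concatSeq g) = concatSeq fun i => (g i).flatten := by
  funext n
  have hwords : ∀ i, concatSeq g i ≠ [] := fun i =>
    let ⟨j, hj⟩ := exists_mem_of_concatSeq hg i; hne j _ hj
  have hblocks : ∀ i, (g i).flatten ≠ [] := fun i => by
    obtain ⟨u, hu⟩ := List.exists_mem_of_ne_nil _ (hg i)
    exact List.flatten_ne_nil_iff.mpr ⟨u, hu, hne i u hu⟩
  have hflat : concatPrefix (fun i => (g i).flatten) (n + 1) =
      (concatPrefix g (n + 1)).flatten := by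
    simp only [concatPrefix, List.flatten_flatten, List.map_ofFn]
    rfl
  have hstream : concatPrefix (concatSeq g) (concatPrefix g (n + 1)).length =
      (concatPrefix g (n + 1)).flatten :=
    concatPrefix_eq_flatten fun i hi => concatSeq_eq_getElem hg hi
  have hn : n < (concatPrefix (fun i => (g i).flatten) (n + 1)).length :=
    le_length_concatPrefix hblocks (n + 1)
  rw [concatSeq_eq_getD hwords (hstream ▸ hflat ▸ hn), hstream, ← hflat]
  rfl

end ConcatSeq

section CodedShift

variable [Inhabited α] [TopologicalSpace α]

theorem shift_iterate_concatSeq_mem_codedShift {B : Finset (List α)} {b : ℕ → List α}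
    (hb : ∀ i, b i ∈ B) (k : ℕ) : shift^[k] (concatSeq b) ∈ codedShift B :=
  subset_closure ⟨b, k, hb, rfl⟩

theorem codedShift_subset_codedShift {B B' : Finset (List α)} (hB : ∀ u ∈ B, u ≠ [])
    (h : ∀ w ∈ B', ∃ l : List (List α), l ≠ [] ∧ (∀ u ∈ l, u ∈ B) ∧ l.flatten = w) :
    codedShift B' ⊆ codedShift B := by
  refine closure_minimal ?_ isClosed_closure
  rintro _ ⟨b, k, hb, rfl⟩
  choose l hl hlB hlb using h
  have hg : ∀ i, l (b i) (hb i) ≠ [] := fun i => hl _ _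
  rw [← funext fun i => hlb _ (hb i), ← concatSeq_concatSeq hg fun i u hu => hB u (hlB _ _ u hu)]
  refine shift_iterate_concatSeq_mem_codedShift (fun i => ?_) k
  obtain ⟨j, hj⟩ := exists_mem_of_concatSeq hg i
  exact hlB _ _ _ hj

end CodedShift

section Blocks

def nextLevel (W : Finset (List α)) (t : ℕ) (τ : List α) : Set (List α) :=
  {w | ∃ bs : List (List α), bs.length = t ∧ (∀ b ∈ bs, b ∈ W) ∧ w = bs.flatten ++ τ}

theorem exists_concatPrefix_length_mem {w : ℕ → List α} {ℓ : ℕ} (hw : ∀ i, w i ≠ [])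
    (hℓ : ∀ i, (w i).length ≤ ℓ) (T : ℕ) :
    ∃ r, T ≤ (concatPrefix w r).length ∧ (concatPrefix w r).length < T + ℓ := by
  induction T with
  | zero =>
    refine ⟨0, le_rfl, ?_⟩
    have := List.length_pos_iff.mpr (hw 0)
    have := hℓ 0
    simp only [concatPrefix_zero, List.length_nil]
    omega
  | succ T ih =>
    obtain ⟨r, h1, h2⟩ := ih
    rcases Nat.lt_or_ge T (concatPrefix w r).length with hlt | hle
    · exact ⟨r, hlt, by omega⟩
    · have := List.length_pos_iff.mpr (hw r)
      have := hℓ r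
      refine ⟨r + 1, ?_, ?_⟩ <;> rw [concatPrefix_succ, List.length_append] <;> omega

theorem exists_length_flatten_eq {W : Finset (List α)} {s ℓ : ℕ}
    (hW : ∀ L, s ≤ L → L ≤ ℓ → ∃ u ∈ W, u.length = L) {k L : ℕ} (h1 : k * s ≤ L)
    (h2 : L ≤ k * ℓ) :
    ∃ bs : List (List α), bs.length = k ∧ (∀ u ∈ bs, u ∈ W) ∧ bs.flatten.length = L := by
  induction k generalizing L with
  | zero => exact ⟨[], rfl, by simp, by simp_all⟩
  | succ k ih =>
    have hsℓ : s ≤ ℓ := Nat.le_of_mul_le_mul_left (h1.trans h2) k.succ_pos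
    have hks : k * s ≤ k * ℓ := Nat.mul_le_mul_left k hsℓ
    rw [Nat.succ_mul] at h1 h2
    obtain ⟨u, hu, hul⟩ := hW (max s (L - k * ℓ)) (le_max_left _ _) (max_le hsℓ (by omega))
    obtain ⟨bs, hbl, hbW, hbL⟩ := ih (L := L - u.length) (by omega) (by omega)
    refine ⟨u :: bs, by simp [hbl], ?_, by simp [hbL]; omega⟩
    rintro v (_ | ⟨_, hv⟩)
    exacts [hu, hbW v hv]

theorem length_flatten_mem_Icc {l : List (List α)} {s ℓ : ℕ}
    (h : ∀ u ∈ l, s ≤ u.length ∧ u.length ≤ ℓ) :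
    l.length * s ≤ l.flatten.length ∧ l.flatten.length ≤ l.length * ℓ := by
  rw [List.length_flatten]
  constructor
  · simpa using List.card_nsmul_le_sum (l.map List.length) s (by simpa using fun u hu => (h u hu).1)
  · simpa using List.sum_le_card_nsmul (l.map List.length) ℓ (by simpa using fun u hu => (h u hu).2)

variable {W B₂ : Finset (List α)} {τ : List α} {t s ℓ : ℕ}

/-- One block of the approximation: keep `t - 3` words of the stream `b`, then replace a run of
further words whose length lies in `[3 s + |τ|, 3 s + |τ| + ℓ)` by three words of `W` followed by
`τ`; such words exist because `3 s ≤ 2 ℓ + 1`. -/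
theorem exists_block (hW : ∀ L, s ≤ L → L ≤ ℓ → ∃ u ∈ W, u.length = L)
    (hWlen : ∀ u ∈ W, s ≤ u.length ∧ u.length ≤ ℓ) (hs : 0 < s) (hsℓ : 3 * s ≤ 2 * ℓ + 1)
    (ht : 3 ≤ t) (hB₂ : nextLevel W t τ ⊆ B₂)
    {b : ℕ → List α} (hb : ∀ i, b i ∈ W) :
    ∃ r, ∃ w ∈ B₂, ∃ p, p <+: concatPrefix b r ∧ p <+: w ∧
      (concatPrefix b r).length = w.length ∧ w.length ≤ p.length + (τ.length + 3 * ℓ) ∧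
      t * s + τ.length ≤ w.length := by
  have hbne : ∀ i, b i ≠ [] := fun i =>
    List.ne_nil_of_length_pos (hs.trans_le (hWlen _ (hb i)).1)
  obtain ⟨r, hr1, hr2⟩ := exists_concatPrefix_length_mem (fun i => hbne (t - 3 + i))
    (fun i => (hWlen _ (hb _)).2) (3 * s + τ.length)
  set q := concatPrefix (fun i => b (t - 3 + i)) r
  obtain ⟨bs, hbsl, hbsW, hbsL⟩ :=
    exists_length_flatten_eq (k := 3) (L := q.length - τ.length) hW (by omega) (by omega)
  set p := concatPrefix b (t - 3)
  have hp : (t - 3) * s ≤ p.length := mul_le_length_concatPrefix (fun i => (hWlen _ (hb i)).1) _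
  have hts : t * s = (t - 3) * s + 3 * s := by rw [← Nat.add_mul, Nat.sub_add_cancel ht]
  have hw : p ++ (bs.flatten ++ τ) ∈ B₂ := by
    have hmem : ∀ u ∈ (List.ofFn fun i : Fin (t - 3) => b i) ++ bs, u ∈ W := by
      simp only [List.mem_append, List.mem_ofFn]
      rintro u (⟨i, rfl⟩ | hu)
      exacts [hb i, hbsW u hu]
    refine hB₂ ⟨_, by simp only [List.length_append, List.length_ofFn, hbsl]; omega, hmem, ?_⟩
    simp [p, concatPrefix, List.flatten_append]
  refine ⟨t - 3 + r, _, hw, p, ?_, List.prefix_append _ _, ?_, ?_, ?_⟩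
  · rw [concatPrefix_add]
    exact List.prefix_append _ _
  · rw [concatPrefix_add]
    change (p ++ q).length = _
    simp only [List.length_append, hbsL]
    omega
  · simp only [List.length_append, hbsL]
    omega
  · simp only [List.length_append, hbsL]
    omega

theorem exists_concatSeq_mismatches_le [DecidableEq α] [Inhabited α]
    (hW : ∀ L, s ≤ L → L ≤ ℓ → ∃ u ∈ W, u.length = L)
    (hWlen : ∀ u ∈ W, s ≤ u.length ∧ u.length ≤ ℓ) (hs : 0 < s) (hsℓ : 3 * s ≤ 2 * ℓ + 1)
    (ht : 3 ≤ t) (hB₂ : nextLevel W t τ ⊆ B₂)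
    {b : ℕ → List α} (hb : ∀ i, b i ∈ W) :
    ∃ b' : ℕ → List α, (∀ i, b' i ∈ B₂) ∧ ∀ n, mismatches (concatSeq b) (concatSeq b') n ≤
      (n / (t * s + τ.length) + 1) * (τ.length + 3 * ℓ) := by
  choose r w hwB p hpb hpw hlen hlenp hDw using
    fun c : {b : ℕ → List α // ∀ i, b i ∈ W} => exists_block hW hWlen hs hsℓ ht hB₂ c.2
  let next (c : {b : ℕ → List α // ∀ i, b i ∈ W}) : {b : ℕ → List α // ∀ i, b i ∈ W} :=
    ⟨fun i => c.1 (r c + i), fun i => c.2 _⟩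
  let S (J : ℕ) := next^[J] ⟨b, hb⟩
  have hS : ∀ J, S (J + 1) = next (S J) := fun J => Function.iterate_succ_apply' _ _ _
  have hD : 0 < t * s + τ.length := by
    have := Nat.mul_le_mul ht hs
    omega
  have hne : ∀ (c : {b : ℕ → List α // ∀ i, b i ∈ W}) i, c.1 i ≠ [] := fun c i =>
    List.ne_nil_of_length_pos (hs.trans_le (hWlen _ (c.2 i)).1)
  have hwne : ∀ c, w c ≠ [] := fun c => List.ne_nil_of_length_pos (hD.trans_le (hDw c))
  refine ⟨fun J => w (S J), fun J => hwB _, fun n => mismatches_le_of_blocks hD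
    (R := fun x y => ∃ J, x = concatSeq (S J).1 ∧ y = concatSeq fun i => w (S (J + i)))
    ?_ ⟨0, rfl, by simp⟩ n⟩
  rintro _ _ ⟨J, rfl, rfl⟩
  refine ⟨(w (S J)).length, hDw _, fun i hi => ?_, J + 1, ?_, ?_⟩
  · have hip : i < (p (S J)).length := by
      have := hlenp (S J)
      omega
    have hw1 : i < (concatPrefix (fun k => w (S (J + k))) 1).length := by
      rw [concatPrefix_one]
      exact hip.trans_le (hpw _).length_le
    rw [concatSeq_eq_getElem (hne _) (hip.trans_le (hpb _).length_le),
      concatSeq_eq_getElem (fun k => hwne _) hw1, ← (hpb _).getElem hip]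
    simp only [concatPrefix_one, add_zero]
    exact (hpw _).getElem hip
  · rw [← hlen, shift_iterate_concatSeq (hne _), hS]
  · have := shift_iterate_concatSeq (w := fun k => w (S (J + k))) (fun k => hwne _) 1
    simp only [concatPrefix_one, add_zero] at this
    simpa only [add_assoc] using this

end Blocks

section Approximation

variable [DecidableEq α] [Inhabited α] [TopologicalSpace α] [DiscreteTopology α] [Finite α]
  {W B₂ : Finset (List α)} {τ : List α} {t s ℓ : ℕ}

theorem exists_mem_codedShift_mismatches_le (hW : ∀ L, s ≤ L → L ≤ ℓ → ∃ u ∈ W, u.length = L)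
    (hWlen : ∀ u ∈ W, s ≤ u.length ∧ u.length ≤ ℓ) (hs : 0 < s) (hsℓ : 3 * s ≤ 2 * ℓ + 1)
    (ht : 3 ≤ t) (hB₂ : nextLevel W t τ ⊆ B₂)
    {x : ℕ → α} (hx : x ∈ codedShift W) :
    ∃ y ∈ codedShift B₂, ∀ n, mismatches x y n ≤
      ((n + ℓ) / (t * s + τ.length) + 1) * (τ.length + 3 * ℓ) := by
  refine exists_mismatches_le_of_mem_closure isClosed_closure ?_ hx
  rintro _ ⟨b, k, hb, rfl⟩
  obtain ⟨j, k', hk', hshift⟩ := exists_shift_iterate_concatSeq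
    (fun i => List.ne_nil_of_length_pos (hs.trans_le (hWlen _ (hb i)).1)) k
  obtain ⟨b', hb'B, hb'⟩ :=
    exists_concatSeq_mismatches_le hW hWlen hs hsℓ ht hB₂ (b := fun i => b (j + i)) fun i => hb _
  refine ⟨_, shift_iterate_concatSeq_mem_codedShift hb'B k', fun n => ?_⟩
  have hk'ℓ : k' ≤ ℓ := hk'.le.trans (hWlen _ (hb j)).2
  rw [hshift]
  calc _ ≤ _ := mismatches_shift_iterate_le _ _ k' n
    _ ≤ _ := hb' _
    _ ≤ _ := Nat.mul_le_mul_right _ (Nat.succ_le_succ (Nat.div_le_div_right (by omega)))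

theorem exists_mem_codedShift_dbar_le (hW : ∀ L, s ≤ L → L ≤ ℓ → ∃ u ∈ W, u.length = L)
    (hWlen : ∀ u ∈ W, s ≤ u.length ∧ u.length ≤ ℓ) (hs : 0 < s) (hsℓ : 3 * s ≤ 2 * ℓ + 1)
    (ht : 3 ≤ t) (hB₂ : nextLevel W t τ ⊆ B₂)
    {x : ℕ → α} (hx : x ∈ codedShift W) :
    ∃ y ∈ codedShift B₂, dbar x y ≤ ((τ.length + 3 * ℓ : ℕ) : ℝ) / (t * s + τ.length : ℕ) := by
  obtain ⟨y, hy, hxy⟩ := exists_mem_codedShift_mismatches_le hW hWlen hs hsℓ ht hB₂ hx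
  set D := t * s + τ.length
  set E := τ.length + 3 * ℓ
  refine ⟨y, hy, dbar_le_of_mismatches_le (C := E / D * ℓ + E) fun n => ?_⟩
  calc (mismatches x y n : ℝ) ≤ (((n + ℓ) / D : ℕ) + 1 : ℝ) * E := by exact_mod_cast hxy n
    _ ≤ ((n + ℓ : ℕ) / D + 1 : ℝ) * E := by gcongr; exact Nat.cast_div_le
    _ = E / D * n + (E / D * ℓ + E) := by push_cast; ring

end Approximation

theorem hausdist_nonneg {Z : Type*} {d : Z → Z → ℝ} (hd : ∀ x y, 0 ≤ d x y) (P Q : Set Z) :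
    0 ≤ hausdist d P Q :=
  le_max_of_le_left (Real.iSup_nonneg fun _ => Real.iInf_nonneg fun _ => hd _ _)

theorem hausdist_le_of_subset {Z : Type*} {d : Z → Z → ℝ} (hd : ∀ x y, 0 ≤ d x y)
    (hself : ∀ x, d x x = 0) {P Q : Set Z} {δ : ℝ} (hδ : 0 ≤ δ)
    (hPQ : ∀ p ∈ P, ∃ q ∈ Q, d p q ≤ δ) (hQP : Q ⊆ P) : hausdist d P Q ≤ δ := by
  have hbdd : ∀ (S : Set Z) (f : S → ℝ), (∀ z, 0 ≤ f z) → BddBelow (Set.range f) :=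
    fun _ _ hf => ⟨0, Set.forall_mem_range.mpr hf⟩
  refine max_le (Real.iSup_le (fun p => ?_) hδ) (Real.iSup_le (fun q => ?_) hδ)
  · obtain ⟨q, hq, hpq⟩ := hPQ p p.2
    exact ciInf_le_of_le (hbdd Q _ fun _ => hd _ _) ⟨q, hq⟩ hpq
  · exact ciInf_le_of_le (hbdd P _ fun _ => hd _ _) ⟨q, hQP q.2⟩ ((hself q).trans_le hδ)

section WordLengths

variable {B : Finset (List Bool)} {u : List Bool}

theorem minLen_le (hu : u ∈ B) : minLen B ≤ u.length :=
  Nat.sInf_le ⟨u, hu, rfl⟩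

theorem le_maxLen (hu : u ∈ B) : u.length ≤ maxLen B :=
  le_csSup (B.finite_toSet.image _).bddAbove ⟨u, hu, rfl⟩

theorem exists_length_eq_minLen (hB : B.Nonempty) : ∃ u ∈ B, u.length = minLen B :=
  Nat.sInf_mem ((Finset.coe_nonempty.mpr hB).image _)

theorem exists_length_eq_maxLen (hB : B.Nonempty) : ∃ u ∈ B, u.length = maxLen B :=
  ((Finset.coe_nonempty.mpr hB).image _).csSup_mem (B.finite_toSet.image _)

end WordLengths

/-- `3 s < 2 ℓ` leaves room for the three replacement words of `exists_block`; with `ℓ ≤ 2 s`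
and the growth condition on `t` it forces `t ≥ 3` and is inherited by the next level. -/
structure GoodLengths (W : Finset (List Bool)) : Prop where
  nonempty : W.Nonempty
  exists_length_eq : ∀ L, minLen W ≤ L → L ≤ maxLen W → ∃ u ∈ W, u.length = L
  minLen_pos : 0 < minLen W
  three_minLen_lt : 3 * minLen W < 2 * maxLen W
  maxLen_le : maxLen W ≤ 2 * minLen W

theorem goodLengths_base : GoodLengths {[false], [true, true]} := by
  have hmin : minLen {[false], [true, true]} = 1 :=
    IsLeast.csInf_eq (by simp [IsLeast, lowerBounds]; omega)
  have hmax : maxLen {[false], [true, true]} = 2 :=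
    IsGreatest.csSup_eq (by simp [IsGreatest, upperBounds]; omega)
  refine ⟨by simp, fun L h1 h2 => ?_, by omega, by omega, by omega⟩
  rw [hmin] at h1
  rw [hmax] at h2
  interval_cases L
  exacts [⟨[false], by simp, rfl⟩, ⟨[true, true], by simp, rfl⟩]

section Recursion

variable {W B₂ : Finset (List Bool)} {τ : List Bool} {t : ℕ}

theorem GoodLengths.minLen_add_maxLen_le (hW : GoodLengths W)
    (hτ : ∃ l : List (List Bool), l.Perm W.toList ∧ τ = l.flatten) :
    minLen W + maxLen W ≤ τ.length := by
  obtain ⟨l, hl, rfl⟩ := hτ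
  obtain ⟨u, hu, hus⟩ := exists_length_eq_minLen hW.nonempty
  obtain ⟨v, hv, hvℓ⟩ := exists_length_eq_maxLen hW.nonempty
  have huv : u ≠ v := by
    rintro rfl
    have := hW.three_minLen_lt
    omega
  rw [List.length_flatten, (hl.map _).sum_eq, Finset.sum_map_toList, ← hus, ← hvℓ,
    ← Finset.sum_pair huv]
  exact Finset.sum_le_sum_of_subset (by simp [Finset.insert_subset_iff, hu, hv])

theorem GoodLengths.three_le (hW : GoodLengths W)
    (hτ : ∃ l : List (List Bool), l.Perm W.toList ∧ τ = l.flatten)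
    (ht : τ.length + 3 * (t * minLen W) < 2 * (t * maxLen W)) : 3 ≤ t := by
  have hτW := hW.minLen_add_maxLen_le hτ
  have h2 : t * maxLen W ≤ 2 * (t * minLen W) := by
    rw [mul_left_comm]
    exact Nat.mul_le_mul_left t hW.maxLen_le
  have : 2 * minLen W < t * minLen W := by
    have := hW.three_minLen_lt
    omega
  exact Nat.lt_of_mul_lt_mul_right this

theorem GoodLengths.exists_length_eq_of_rec (hW : GoodLengths W)
    (hrec : (B₂ : Set (List Bool)) = nextLevel W t τ)
    {L : ℕ} (h1 : t * minLen W + τ.length ≤ L) (h2 : L ≤ t * maxLen W + τ.length) :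
    ∃ w ∈ B₂, w.length = L := by
  obtain ⟨bs, hbl, hbW, hbL⟩ := exists_length_flatten_eq hW.exists_length_eq
    (k := t) (L := L - τ.length) (by omega) (by omega)
  refine ⟨bs.flatten ++ τ, ?_, by simp [hbL]; omega⟩
  rw [← Finset.mem_coe, hrec]
  exact ⟨bs, hbl, hbW, rfl⟩

theorem length_mem_Icc_of_rec
    (hrec : (B₂ : Set (List Bool)) = nextLevel W t τ)
    {w : List Bool} (hw : w ∈ B₂) :
    t * minLen W + τ.length ≤ w.length ∧ w.length ≤ t * maxLen W + τ.length := by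
  rw [← Finset.mem_coe, hrec] at hw
  obtain ⟨bs, rfl, hbW, rfl⟩ := hw
  have := length_flatten_mem_Icc fun u hu => ⟨minLen_le (hbW u hu), le_maxLen (hbW u hu)⟩
  simp only [List.length_append]
  omega

theorem GoodLengths.of_rec (hW : GoodLengths W)
    (hτ : ∃ l : List (List Bool), l.Perm W.toList ∧ τ = l.flatten)
    (hrec : (B₂ : Set (List Bool)) = nextLevel W t τ)
    (ht : τ.length + 3 * (t * minLen W) < 2 * (t * maxLen W)) : GoodLengths B₂ := by
  have hsℓ : t * minLen W ≤ t * maxLen W := by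
    have := hW.three_minLen_lt
    exact Nat.mul_le_mul_left t (by omega)
  have hmin : minLen B₂ = t * minLen W + τ.length := by
    obtain ⟨w, hw, hwL⟩ := hW.exists_length_eq_of_rec hrec le_rfl (by omega)
    exact IsLeast.csInf_eq ⟨⟨w, hw, hwL⟩, by
      rintro _ ⟨v, hv, rfl⟩
      exact (length_mem_Icc_of_rec hrec hv).1⟩
  have hmax : maxLen B₂ = t * maxLen W + τ.length := by
    obtain ⟨w, hw, hwL⟩ := hW.exists_length_eq_of_rec hrec (by omega) le_rfl
    exact IsGreatest.csSup_eq ⟨⟨w, hw, hwL⟩, by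
      rintro _ ⟨v, hv, rfl⟩
      exact (length_mem_Icc_of_rec hrec hv).2⟩
  have h2 : t * maxLen W ≤ 2 * (t * minLen W) := by
    rw [mul_left_comm]
    exact Nat.mul_le_mul_left t hW.maxLen_le
  have h3 := hW.three_le hτ ht
  refine ⟨?_, fun L h1 h2 => hW.exists_length_eq_of_rec hrec (hmin ▸ h1) (hmax ▸ h2), ?_, ?_, ?_⟩
  · obtain ⟨w, hw, -⟩ := hW.exists_length_eq_of_rec hrec le_rfl (by omega)
    exact ⟨w, hw⟩
  · rw [hmin]
    exact Nat.add_pos_left (Nat.mul_pos (by omega) hW.minLen_pos) _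
  · rw [hmin, hmax]
    omega
  · rw [hmin, hmax]
    omega

theorem GoodLengths.hausdist_codedShift_le (hW : GoodLengths W)
    (hτ : ∃ l : List (List Bool), l.Perm W.toList ∧ τ = l.flatten)
    (hrec : (B₂ : Set (List Bool)) = nextLevel W t τ)
    (ht : τ.length + 3 * (t * minLen W) < 2 * (t * maxLen W)) :
    hausdist dbar (codedShift W) (codedShift B₂) ≤
      ((τ.length + 3 * maxLen W : ℕ) : ℝ) / (t * minLen W + τ.length : ℕ) := by
  have h3 := hW.three_le hτ ht
  have hWne : ∀ u ∈ W, u ≠ [] := fun u hu =>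
    List.ne_nil_of_length_pos (hW.minLen_pos.trans_le (minLen_le hu))
  refine hausdist_le_of_subset dbar_nonneg dbar_self (by positivity) (fun x hx => ?_) ?_
  · refine exists_mem_codedShift_dbar_le hW.exists_length_eq
      (fun u hu => ⟨minLen_le hu, le_maxLen hu⟩) hW.minLen_pos
      (by have := hW.three_minLen_lt; omega) h3 hrec.ge hx
  · refine codedShift_subset_codedShift hWne fun w hw => ?_
    rw [← Finset.mem_coe, hrec] at hw
    obtain ⟨bs, hbl, hbW, rfl⟩ := hw
    obtain ⟨l, hl, rfl⟩ := hτ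
    refine ⟨bs ++ l, List.ne_nil_of_length_pos (by rw [List.length_append, hbl]; omega),
      fun u hu => ?_, List.flatten_append ..⟩
    rcases List.mem_append.mp hu with hu | hu
    exacts [hbW u hu, Finset.mem_toList.mp (hl.subset hu)]

end Recursion

theorem GoodLengths.add_lt_of_div_lt {W : Finset (List Bool)} (hW : GoodLengths W) {T t : ℕ}
    (h : (T : ℝ) / (2 * maxLen W - 3 * minLen W) < t) :
    T + 3 * (t * minLen W) < 2 * (t * maxLen W) := by
  have hW3 : (3 * minLen W : ℝ) < 2 * maxLen W := by exact_mod_cast hW.three_minLen_lt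
  rw [div_lt_iff₀ (by linarith)] at h
  exact_mod_cast (by linarith : (T : ℝ) + 3 * (t * minLen W) < 2 * (t * maxLen W))

theorem div_lt_div_two_pow {T ℓ s t ε : ℝ} (m : ℕ) (hs : 0 < s) (hε : 0 < ε) (hT : 0 ≤ T)
    (hℓ : 0 ≤ ℓ) (h : 2 ^ m * (T + 3 * ℓ) / (s * ε) < t) :
    (T + 3 * ℓ) / (t * s + T) < ε / 2 ^ m := by
  rw [div_lt_iff₀ (by positivity)] at h
  have hts : 0 < t * s := by
    have : 0 < t * s * ε := by nlinarith [pow_pos (two_pos (α := ℝ)) m]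
    exact (mul_pos_iff_of_pos_right hε).mp this
  rw [div_lt_div_iff₀ (by positivity) (by positivity)]
  nlinarith [mul_nonneg hε.le hT]

theorem summable_and_tsum_lt_of_lt_two_pow {f : ℕ → ℝ} {ε : ℝ} (h0 : ∀ n, 0 ≤ f n)
    (h : ∀ n, f n < ε / 2 ^ (n + 1)) : Summable f ∧ ∑' n, f n < ε := by
  simp only [pow_succ', ← div_div] at h
  have hsum := summable_geometric_two' ε
  refine ⟨hsum.of_nonneg_of_le h0 fun n => (h n).le, ?_⟩
  calc ∑' n, f n < ∑' n, ε / 2 / 2 ^ n :=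
        Summable.tsum_lt_tsum_of_nonneg h0 (fun n => (h n).le) (h 0) hsum
    _ = ε := tsum_geometric_two' ε

theorem statement17_general (B : ℕ → Finset (List Bool)) (t : ℕ → ℕ) (τ : ℕ → List Bool)
    (hB1 : B 1 = {[false], [true, true]})
    (hτ : ∀ n : ℕ, 1 ≤ n → ∃ l : List (List Bool), l.Perm (B n).toList ∧ τ n = l.flatten)
    (hrec : ∀ n : ℕ, 1 ≤ n → (B (n + 1) : Set (List Bool)) =
      {w | ∃ bs : List (List Bool), bs.length = t n ∧ (∀ b ∈ bs, b ∈ B n) ∧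
        w = bs.flatten ++ τ n})
    (ε : ℝ) (hε : 0 < ε)
    (ht3 : ∀ n : ℕ, 1 ≤ n →
      (((τ n).length : ℝ) / (2 * (maxLen (B n) : ℝ) - 3 * (minLen (B n) : ℝ)) < (t n : ℝ)))
    (ht4 : ∀ n : ℕ, 1 ≤ n →
      ((2 : ℝ) ^ n * (((τ n).length : ℝ) + 3 * (maxLen (B n) : ℝ)) /
        ((minLen (B n) : ℝ) * ε) < (t n : ℝ))) :
    Summable (fun n : ℕ =>
      hausdist dbar (codedShift (B (n + 1))) (codedShift (B (n + 2)))) ∧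
    ∑' n : ℕ, hausdist dbar (codedShift (B (n + 1))) (codedShift (B (n + 2))) < ε := by
  have hgood : ∀ n, 1 ≤ n → GoodLengths (B n) := by
    intro n hn
    induction n, hn using Nat.le_induction with
    | base => exact hB1 ▸ goodLengths_base
    | succ n hn ih => exact ih.of_rec (hτ n hn) (hrec n hn) (ih.add_lt_of_div_lt (ht3 n hn))
  refine summable_and_tsum_lt_of_lt_two_pow (fun n => hausdist_nonneg dbar_nonneg _ _)
    fun n => ?_
  have hG := hgood (n + 1) n.succ_pos
  calc _ ≤ _ := hG.hausdist_codedShift_le (hτ _ n.succ_pos) (hrec _ n.succ_pos)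
        (hG.add_lt_of_div_lt (ht3 _ n.succ_pos))
    _ < ε / 2 ^ (n + 1) := by
        push_cast
        exact div_lt_div_two_pow _ (by exact_mod_cast hG.minLen_pos) hε (by positivity)
          (by positivity) (ht4 _ n.succ_pos)

/-- under the growth conditions on `t(n)`, the coded shifts `X_n` form a
`d̄^H`-Cauchy sequence with total variation less than `ε`. -/
theorem statement17 (B : ℕ → Finset (List Bool)) (t : ℕ → ℕ) (τ : ℕ → List Bool)
    (hB1 : B 1 = {[false], [true, true]})
    (ht2 : ∀ n : ℕ, 1 ≤ n → 2 ≤ t n)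
    (hτ : ∀ n : ℕ, 1 ≤ n → ∃ l : List (List Bool), l.Perm (B n).toList ∧ τ n = l.flatten)
    (hrec : ∀ n : ℕ, 1 ≤ n → (B (n + 1) : Set (List Bool)) =
      {w | ∃ bs : List (List Bool), bs.length = t n ∧ (∀ b ∈ bs, b ∈ B n) ∧
        w = bs.flatten ++ τ n})
    (ε : ℝ) (hε : 0 < ε)
    (ht3 : ∀ n : ℕ, 1 ≤ n →
      (((τ n).length : ℝ) / (2 * (maxLen (B n) : ℝ) - 3 * (minLen (B n) : ℝ)) < (t n : ℝ)))
    (ht4 : ∀ n : ℕ, 1 ≤ n →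
      ((2 : ℝ) ^ n * (((τ n).length : ℝ) + 3 * (maxLen (B n) : ℝ)) /
        ((minLen (B n) : ℝ) * ε) < (t n : ℝ))) :
    Summable (fun n : ℕ =>
      hausdist dbar (codedShift (B (n + 1))) (codedShift (B (n + 2)))) ∧
    ∑' n : ℕ, hausdist dbar (codedShift (B (n + 1))) (codedShift (B (n + 2))) < ε :=
  statement17_general B t τ hB1 hτ hrec ε hε ht3 ht4

end DbarPaper
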